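/- Let μ and ν be finite Borel measures on ℝ² satisfying μ(dx) ≤ C₁ min(ε^{-1}, |x|^{-1}) dx + C₁ dx and ν(dx) ≤ C₁ |x|^{-1} e^{-c|x|} dx, for constants C₁ < ∞, c > 0 and ε ∈ (0, 1/2). Then there is a constant C₂ (depending only on C₁, c) such that ε^{-1} Σ_{z ∈ ℤ²} μ(B(εz, 2ε)) · ν(B(εz, 3ε)) ≤ C₂ · ε · |log ε|. -/

import Mathlib

/-!
Write `K(r) = C₁ (6 min(ε⁻¹, r⁻¹) + 1) · C₁ r⁻¹ e^{-cr}`. The density of `μ` varies by at most a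
factor 6 over distances `5ε`, so `μ(B(εz, 2ε)) ≤ 4πε² C₁ (6 min(ε⁻¹, |x|⁻¹) + 1)` for every `x`
in `B(εz, 3ε)`; integrating against the density of `ν` gives
`μ(B(εz, 2ε)) ν(B(εz, 3ε)) ≤ 4πε² ∫_{B(εz, 3ε)} K(|x|) dx`. Every point lies in at most `7²` of
the balls `B(εz, 3ε)`, so the sum is at most `49 · 4πε² ∫_{ℝ²} K(|x|) dx`. In polar coordinates
the factor `r⁻¹` of `K` cancels the Jacobian `r`, and
`∫₀^∞ max(min(ε⁻¹, r⁻¹), 1) e^{-cr} dr ≤ 1 + |log ε| + c⁻¹ ≤ (3 + 2/c) |log ε|` for `ε < 1/2`.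
-/

open MeasureTheory ProbabilityTheory Real Set

/-- The lattice point εz ∈ ℝ² for z ∈ ℤ². -/
noncomputable def lattPt (ε : ℝ) (z : ℤ × ℤ) : EuclideanSpace ℝ (Fin 2) :=
  (WithLp.equiv 2 (Fin 2 → ℝ)).symm ![ε * z.1, ε * z.2]

open Metric
open scoped ENNReal

local notation "ℝ²" => EuclideanSpace ℝ (Fin 2)

section Polar

variable {E : Type*} [NormedAddCommGroup E] [NormedSpace ℝ E] [Nontrivial E]
  [FiniteDimensional ℝ E] [MeasurableSpace E] [BorelSpace E] (μ : Measure E) [μ.IsAddHaarMeasure]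

theorem lintegral_fun_norm_addHaar {f : ℝ → ℝ≥0∞} (hf : Measurable f) :
    ∫⁻ x, f ‖x‖ ∂μ = Module.finrank ℝ E * μ (ball 0 1) *
      ∫⁻ y in Ioi 0, ENNReal.ofReal (y ^ (Module.finrank ℝ E - 1)) * f y := by
  have hf' : Measurable fun p : sphere (0 : E) 1 × Ioi (0 : ℝ) ↦ f p.2 := by fun_prop
  calc ∫⁻ x, f ‖x‖ ∂μ = ∫⁻ x : ({0}ᶜ : Set E), f ‖(x : E)‖ ∂(μ.comap (↑)) := by
        rw [lintegral_subtype_comap (measurableSet_singleton _).compl (fun a : E ↦ f ‖a‖),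
          restrict_compl_singleton]
    _ = ∫⁻ p, f p.2 ∂(μ.toSphere.prod (.volumeIoiPow (Module.finrank ℝ E - 1))) := by
        rw [← μ.measurePreserving_homeomorphUnitSphereProd.lintegral_comp hf']
        simp [homeomorphUnitSphereProd_apply_snd_coe]
    _ = μ.toSphere univ * ∫⁻ r, f r ∂(.volumeIoiPow (Module.finrank ℝ E - 1)) := by
        rw [lintegral_prod _ hf'.aemeasurable]
        simp [lintegral_const, mul_comm]
    _ = _ := by
        rw [Measure.toSphere_apply_univ, Measure.volumeIoiPow,
          lintegral_withDensity_eq_lintegral_mul _ (by fun_prop) (by fun_prop)]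
        exact congrArg _ (lintegral_subtype_comap measurableSet_Ioi
          fun y ↦ ENNReal.ofReal (y ^ (Module.finrank ℝ E - 1)) * f y)

theorem lintegral_fun_norm_euclideanSpace_fin_two {f : ℝ → ℝ≥0∞} (hf : Measurable f) :
    ∫⁻ x : ℝ², f ‖x‖ = ENNReal.ofReal (2 * π) * ∫⁻ r in Ioi 0, ENNReal.ofReal r * f r := by
  rw [lintegral_fun_norm_addHaar _ hf, finrank_euclideanSpace_fin,
    EuclideanSpace.volume_ball_fin_two, ENNReal.ofReal_mul zero_le_two]
  norm_num

end Polar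

section LatticeOverlap

lemma mem_Icc_floor_of_abs_sub_lt {s : ℝ} {w k : ℤ} (h : |s - w| < k) :
    w ∈ Finset.Icc (⌊s⌋ - k) (⌊s⌋ + k) := by
  rw [abs_sub_lt_iff] at h
  have hlow : ⌊s⌋ < w + k := Int.floor_lt.2 (by push_cast; linarith)
  have hup : w - k ≤ ⌊s⌋ := Int.le_floor.2 (by push_cast; linarith)
  exact Finset.mem_Icc.2 ⟨by omega, by omega⟩

lemma mem_Icc_floor_div_of_dist_lt {ε : ℝ} (hε : 0 < ε) {t : ℝ} {w : ℤ} {k : ℕ}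
    (h : dist t (ε * w) < k * ε) : w ∈ Finset.Icc (⌊t / ε⌋ - k) (⌊t / ε⌋ + k) := by
  apply mem_Icc_floor_of_abs_sub_lt
  have hquot : t / ε - w = (t - ε * w) / ε := by field_simp
  rw [hquot, abs_div, abs_of_pos hε, div_lt_iff₀ hε]
  exact_mod_cast h

variable {ε : ℝ} (hε : 0 < ε) (k : ℕ)
include hε

lemma mem_window_of_mem_ball_lattPt {x : ℝ²} {z : ℤ × ℤ} (hx : x ∈ ball (lattPt ε z) (k * ε)) :
    z ∈ Finset.Icc (⌊x 0 / ε⌋ - k) (⌊x 0 / ε⌋ + k) ×ˢ Finset.Icc (⌊x 1 / ε⌋ - k) (⌊x 1 / ε⌋ + k) :=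
  Finset.mem_product.2
    ⟨mem_Icc_floor_div_of_dist_lt hε ((PiLp.dist_apply_le x (lattPt ε z) 0).trans_lt hx),
      mem_Icc_floor_div_of_dist_lt hε ((PiLp.dist_apply_le x (lattPt ε z) 1).trans_lt hx)⟩

lemma tsum_indicator_ball_lattPt_le (f : ℝ² → ℝ≥0∞) (x : ℝ²) :
    ∑' z, (ball (lattPt ε z) (k * ε)).indicator f x ≤ (2 * k + 1) ^ 2 * f x := by
  set S := Finset.Icc (⌊x 0 / ε⌋ - k) (⌊x 0 / ε⌋ + k) ×ˢ
    Finset.Icc (⌊x 1 / ε⌋ - k) (⌊x 1 / ε⌋ + k)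
  have hS : S.card = (2 * k + 1) ^ 2 := by
    have hcard : ∀ n : ℤ, (n + k + 1 - (n - k)).toNat = 2 * k + 1 := fun n ↦ by omega
    rw [Finset.card_product, Int.card_Icc, Int.card_Icc, hcard, hcard, sq]
  rw [tsum_eq_sum fun z hz ↦
    indicator_of_notMem (fun hx ↦ hz (mem_window_of_mem_ball_lattPt hε k hx)) _]
  calc ∑ z ∈ S, (ball (lattPt ε z) (k * ε)).indicator f x
      ≤ ∑ _z ∈ S, f x := Finset.sum_le_sum fun z _ ↦ indicator_apply_le fun _ ↦ le_rfl
    _ = (2 * k + 1) ^ 2 * f x := by rw [Finset.sum_const, hS, nsmul_eq_mul]; norm_cast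

lemma tsum_setLIntegral_ball_lattPt_le {f : ℝ² → ℝ≥0∞} (hf : Measurable f) :
    ∑' z, ∫⁻ x in ball (lattPt ε z) (k * ε), f x ≤ (2 * k + 1) ^ 2 * ∫⁻ x, f x := by
  simp_rw [← lintegral_indicator measurableSet_ball]
  rw [← lintegral_tsum fun z ↦ (hf.indicator measurableSet_ball).aemeasurable,
    ← lintegral_const_mul _ hf]
  exact lintegral_mono fun x ↦ tsum_indicator_ball_lattPt_le hε k f x

end LatticeOverlap

section RadialIntegrals

lemma lintegral_Ioc_ofReal_inv {a b : ℝ} (ha : 0 < a) (hab : a ≤ b) :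
    ∫⁻ r in Ioc a b, ENNReal.ofReal r⁻¹ = ENNReal.ofReal (log (b / a)) := by
  have hint : IntegrableOn (fun r : ℝ ↦ r⁻¹) (Ioc a b) :=
    ((continuousOn_inv₀.mono fun r hr ↦ (ha.trans_le hr.1).ne').integrableOn_Icc).mono_set
      Ioc_subset_Icc_self
  rw [← ofReal_integral_eq_lintegral_ofReal hint
      ((ae_restrict_mem measurableSet_Ioc).mono fun r hr ↦ inv_nonneg.2 (ha.trans hr.1).le),
    ← intervalIntegral.integral_of_le hab,
    integral_inv fun h ↦ (lt_irrefl 0 (ha.trans_le ((uIcc_of_le hab ▸ h).1))).elim]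

lemma lintegral_Ioi_ofReal_exp_neg_mul {c : ℝ} (hc : 0 < c) (a : ℝ) :
    ∫⁻ r in Ioi a, ENNReal.ofReal (exp (-c * r)) = ENNReal.ofReal (exp (-c * a) / c) := by
  rw [← ofReal_integral_eq_lintegral_ofReal (exp_neg_integrableOn_Ioi a hc)
      (.of_forall fun r ↦ (exp_pos _).le),
    integral_exp_mul_Ioi (neg_lt_zero.2 hc), div_neg, neg_div, neg_neg]

lemma lintegral_Ioi_max_min_inv_mul_exp_le {ε c : ℝ} (hε : 0 < ε) (hε1 : ε ≤ 1) (hc : 0 < c) :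
    ∫⁻ r in Ioi 0, ENNReal.ofReal (max (min ε⁻¹ r⁻¹) 1 * exp (-c * r)) ≤
      ENNReal.ofReal (1 + |log ε| + c⁻¹) := by
  set g : ℝ → ℝ := fun r ↦ max (min ε⁻¹ r⁻¹) 1 * exp (-c * r)
  have hexp_le_one : ∀ r, 0 ≤ r → exp (-c * r) ≤ 1 := fun r hr ↦
    exp_le_one_iff.2 (by nlinarith)
  have hnear : ∀ r ∈ Ioc 0 ε, ENNReal.ofReal (g r) ≤ ENNReal.ofReal ε⁻¹ := fun r hr ↦
    ENNReal.ofReal_le_ofReal <|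
      (mul_le_of_le_one_right (by positivity) (hexp_le_one r hr.1.le)).trans
        (max_le (min_le_left _ _) (one_le_inv₀ hε |>.2 hε1))
  have hmid : ∀ r ∈ Ioc ε 1, ENNReal.ofReal (g r) ≤ ENNReal.ofReal r⁻¹ := fun r hr ↦
    have hr0 : 0 < r := hε.trans hr.1
    ENNReal.ofReal_le_ofReal <|
      (mul_le_of_le_one_right (by positivity) (hexp_le_one r hr0.le)).trans
        (max_le (min_le_right _ _) (one_le_inv₀ hr0 |>.2 hr.2))
  have hfar : ∀ r ∈ Ioi 1, ENNReal.ofReal (g r) ≤ ENNReal.ofReal (exp (-c * r)) := fun r hr ↦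
    have hmin : min ε⁻¹ r⁻¹ ≤ 1 := (min_le_right _ _).trans (inv_le_one_of_one_le₀ (le_of_lt hr))
    ENNReal.ofReal_le_ofReal <| by simp [g, max_eq_right hmin]
  have hsplit : Ioi (0 : ℝ) ⊆ Ioc 0 ε ∪ Ioc ε 1 ∪ Ioi 1 := by
    intro r hr
    rcases le_or_gt r ε with h | h
    · exact Or.inl (Or.inl ⟨hr, h⟩)
    rcases le_or_gt r 1 with h' | h'
    · exact Or.inl (Or.inr ⟨h, h'⟩)
    · exact Or.inr h'
  calc ∫⁻ r in Ioi 0, ENNReal.ofReal (g r)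
      ≤ (∫⁻ r in Ioc 0 ε, ENNReal.ofReal (g r)) + (∫⁻ r in Ioc ε 1, ENNReal.ofReal (g r)) +
          ∫⁻ r in Ioi 1, ENNReal.ofReal (g r) :=
        (lintegral_mono_set hsplit).trans <| (lintegral_union_le _ _ _).trans <|
          by gcongr; exact lintegral_union_le _ _ _
    _ ≤ (∫⁻ _ in Ioc 0 ε, ENNReal.ofReal ε⁻¹) + (∫⁻ r in Ioc ε 1, ENNReal.ofReal r⁻¹) +
          ∫⁻ r in Ioi 1, ENNReal.ofReal (exp (-c * r)) := by
        gcongr ?_ + ?_ + ?_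
        · exact setLIntegral_mono measurable_const hnear
        · exact setLIntegral_mono (by fun_prop) hmid
        · exact setLIntegral_mono (by fun_prop) hfar
    _ = ENNReal.ofReal 1 + ENNReal.ofReal (log (1 / ε)) + ENNReal.ofReal (exp (-c * 1) / c) := by
        rw [setLIntegral_const, Real.volume_Ioc, sub_zero, ← ENNReal.ofReal_mul (inv_pos.2 hε).le,
          inv_mul_cancel₀ hε.ne', lintegral_Ioc_ofReal_inv hε hε1,
          lintegral_Ioi_ofReal_exp_neg_mul hc]
    _ ≤ ENNReal.ofReal 1 + ENNReal.ofReal |log ε| + ENNReal.ofReal c⁻¹ := by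
        rw [one_div, log_inv, ← abs_of_nonpos (log_nonpos hε.le hε1), div_eq_mul_inv]
        gcongr
        exact mul_le_of_le_one_left (inv_pos.2 hc).le (hexp_le_one 1 zero_le_one)
    _ = ENNReal.ofReal (1 + |log ε| + c⁻¹) := by
        rw [← ENNReal.ofReal_add, ← ENNReal.ofReal_add] <;> positivity

lemma one_add_abs_log_add_inv_le {ε c : ℝ} (hε : 0 < ε) (hε_half : ε < 1 / 2) (hc : 0 < c) :
    1 + |log ε| + c⁻¹ ≤ (3 + 2 / c) * |log ε| := by
  have hlog : 1 ≤ 2 * |log ε| := by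
    have hlog_lt : log ε < -log 2 := by
      simpa [log_inv] using log_lt_log hε (hε_half.trans_eq (one_div 2))
    have := log_two_gt_d9
    rw [abs_of_neg (by linarith)]
    linarith
  have := mul_le_mul_of_nonneg_left hlog (inv_pos.2 hc).le
  rw [div_eq_mul_inv]
  linarith

end RadialIntegrals

lemma min_inv_le_six_mul_min_inv {ε a b : ℝ} (hε : 0 < ε) (ha : 0 < a) (h : a - 5 * ε ≤ b) :
    min ε⁻¹ b⁻¹ ≤ 6 * min ε⁻¹ a⁻¹ := by
  rw [mul_min_of_nonneg _ _ (by norm_num : (0 : ℝ) ≤ 6)]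
  have hε6 : ε⁻¹ ≤ 6 * ε⁻¹ := by linarith [inv_pos.2 hε]
  rcases le_or_gt a (6 * ε) with hsmall | hlarge
  · refine (min_le_left _ _).trans (le_min hε6 ?_)
    calc ε⁻¹ = 6 * (6 * ε)⁻¹ := by field_simp
      _ ≤ 6 * a⁻¹ := by gcongr
  · refine min_le_min hε6 ?_
    calc b⁻¹ ≤ (a / 6)⁻¹ := inv_anti₀ (by positivity) (by linarith)
      _ = 6 * a⁻¹ := by field_simp

noncomputable def mismatchKernel (C₁ c ε r : ℝ) : ℝ :=
  (6 * C₁ * min ε⁻¹ r⁻¹ + C₁) * (C₁ * r⁻¹ * exp (-c * r))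

lemma measurable_mismatchKernel (C₁ c ε : ℝ) : Measurable (mismatchKernel C₁ c ε) := by
  unfold mismatchKernel
  fun_prop

section DensityBounds

variable {μ ν : Measure ℝ²} {C₁ c ε : ℝ}

lemma measure_ball_two_mul_le (hC₁ : 0 ≤ C₁) (hε : 0 < ε)
    (hμ : ∀ A, MeasurableSet A → μ A ≤ ∫⁻ x in A, ENNReal.ofReal (C₁ * min ε⁻¹ ‖x‖⁻¹ + C₁))
    {p x : ℝ²} (hx : x ∈ ball p (3 * ε)) (hx0 : x ≠ 0) :
    μ (ball p (2 * ε)) ≤ ENNReal.ofReal (4 * π * ε ^ 2 * (6 * C₁ * min ε⁻¹ ‖x‖⁻¹ + C₁)) := by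
  have hdens : ∀ y ∈ ball p (2 * ε),
      C₁ * min ε⁻¹ ‖y‖⁻¹ + C₁ ≤ 6 * C₁ * min ε⁻¹ ‖x‖⁻¹ + C₁ := by
    intro y hy
    have hxy : ‖x‖ - 5 * ε ≤ ‖y‖ := by
      have := dist_triangle x p y
      rw [mem_ball] at hx hy
      linarith [norm_sub_norm_le x y, dist_eq_norm x y, dist_comm y p]
    have := min_inv_le_six_mul_min_inv hε (norm_pos_iff.2 hx0) hxy
    nlinarith
  calc μ (ball p (2 * ε))
      ≤ ∫⁻ y in ball p (2 * ε), ENNReal.ofReal (C₁ * min ε⁻¹ ‖y‖⁻¹ + C₁) :=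
        hμ _ measurableSet_ball
    _ ≤ ∫⁻ _ in ball p (2 * ε), ENNReal.ofReal (6 * C₁ * min ε⁻¹ ‖x‖⁻¹ + C₁) :=
        setLIntegral_mono measurable_const fun y hy ↦ ENNReal.ofReal_le_ofReal (hdens y hy)
    _ = ENNReal.ofReal (6 * C₁ * min ε⁻¹ ‖x‖⁻¹ + C₁) *
          (ENNReal.ofReal (2 * ε) ^ 2 * ENNReal.ofReal π) := by
        rw [setLIntegral_const, EuclideanSpace.volume_ball_fin_two]
    _ = _ := by
        rw [← ENNReal.ofReal_pow (by positivity), ← ENNReal.ofReal_mul (by positivity),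
          ← ENNReal.ofReal_mul (by positivity)]
        ring_nf

lemma measure_ball_mul_measure_ball_le (hC₁ : 0 ≤ C₁) (hε : 0 < ε)
    (hμ : ∀ A, MeasurableSet A → μ A ≤ ∫⁻ x in A, ENNReal.ofReal (C₁ * min ε⁻¹ ‖x‖⁻¹ + C₁))
    (hν : ∀ A, MeasurableSet A → ν A ≤ ∫⁻ x in A, ENNReal.ofReal (C₁ * ‖x‖⁻¹ * exp (-c * ‖x‖)))
    (p : ℝ²) :
    μ (ball p (2 * ε)) * ν (ball p (3 * ε)) ≤ ENNReal.ofReal (4 * π * ε ^ 2) *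
      ∫⁻ x in ball p (3 * ε), ENNReal.ofReal (mismatchKernel C₁ c ε ‖x‖) := by
  rw [← lintegral_const_mul' _ _ ENNReal.ofReal_ne_top]
  calc μ (ball p (2 * ε)) * ν (ball p (3 * ε))
      ≤ μ (ball p (2 * ε)) *
          ∫⁻ x in ball p (3 * ε), ENNReal.ofReal (C₁ * ‖x‖⁻¹ * exp (-c * ‖x‖)) := by
        gcongr
        exact hν _ measurableSet_ball
    _ = ∫⁻ x in ball p (3 * ε),
          μ (ball p (2 * ε)) * ENNReal.ofReal (C₁ * ‖x‖⁻¹ * exp (-c * ‖x‖)) :=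
        (lintegral_const_mul _ (by fun_prop)).symm
    _ ≤ _ := by
        refine setLIntegral_mono_ae' measurableSet_ball ?_
        filter_upwards [compl_mem_ae_iff.2 (measure_singleton (0 : ℝ²))] with x hx0 hx
        grw [measure_ball_two_mul_le hC₁ hε hμ hx hx0]
        rw [← ENNReal.ofReal_mul (by positivity), ← ENNReal.ofReal_mul (by positivity)]
        exact ENNReal.ofReal_le_ofReal (le_of_eq (by unfold mismatchKernel; ring))

lemma lintegral_mismatchKernel_le (hC₁ : 0 ≤ C₁) (hc : 0 < c) (hε : 0 < ε) (hε1 : ε ≤ 1) :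
    ∫⁻ x : ℝ², ENNReal.ofReal (mismatchKernel C₁ c ε ‖x‖) ≤
      ENNReal.ofReal (14 * π * C₁ ^ 2 * (1 + |log ε| + c⁻¹)) := by
  have hpointwise : ∀ r ∈ Ioi (0 : ℝ),
      ENNReal.ofReal r * ENNReal.ofReal (mismatchKernel C₁ c ε r) ≤
        ENNReal.ofReal (7 * C₁ ^ 2) * ENNReal.ofReal (max (min ε⁻¹ r⁻¹) 1 * exp (-c * r)) := by
    intro r (hr : 0 < r)
    rw [← ENNReal.ofReal_mul hr.le, ← ENNReal.ofReal_mul (by positivity)]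
    refine ENNReal.ofReal_le_ofReal ?_
    have hm : 6 * C₁ * min ε⁻¹ r⁻¹ + C₁ ≤ 7 * C₁ * max (min ε⁻¹ r⁻¹) 1 := by
      nlinarith [le_max_left (min ε⁻¹ r⁻¹) 1, le_max_right (min ε⁻¹ r⁻¹) 1]
    calc r * mismatchKernel C₁ c ε r
        = (6 * C₁ * min ε⁻¹ r⁻¹ + C₁) * C₁ * exp (-c * r) * (r * r⁻¹) := by
          unfold mismatchKernel; ring
      _ ≤ 7 * C₁ * max (min ε⁻¹ r⁻¹) 1 * C₁ * exp (-c * r) := by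
          rw [mul_inv_cancel₀ hr.ne', mul_one]; gcongr
      _ = 7 * C₁ ^ 2 * (max (min ε⁻¹ r⁻¹) 1 * exp (-c * r)) := by ring
  rw [lintegral_fun_norm_euclideanSpace_fin_two ((measurable_mismatchKernel C₁ c ε).ennreal_ofReal)]
  calc ENNReal.ofReal (2 * π) *
        ∫⁻ r in Ioi 0, ENNReal.ofReal r * ENNReal.ofReal (mismatchKernel C₁ c ε r)
      ≤ ENNReal.ofReal (2 * π) * (ENNReal.ofReal (7 * C₁ ^ 2) *
          ∫⁻ r in Ioi 0, ENNReal.ofReal (max (min ε⁻¹ r⁻¹) 1 * exp (-c * r))) := by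
        gcongr _ * ?_
        rw [← lintegral_const_mul' _ _ ENNReal.ofReal_ne_top]
        exact setLIntegral_mono (by fun_prop) hpointwise
    _ ≤ ENNReal.ofReal (2 * π) * (ENNReal.ofReal (7 * C₁ ^ 2) *
          ENNReal.ofReal (1 + |log ε| + c⁻¹)) := by
        grw [lintegral_Ioi_max_min_inv_mul_exp_le hε hε1 hc]
    _ = _ := by
        rw [← ENNReal.ofReal_mul (by positivity), ← ENNReal.ofReal_mul (by positivity)]
        ring_nf

lemma tsum_measure_ball_mul_measure_ball_le (hC₁ : 0 ≤ C₁) (hc : 0 < c) (hε : 0 < ε)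
    (hε1 : ε ≤ 1)
    (hμ : ∀ A, MeasurableSet A → μ A ≤ ∫⁻ x in A, ENNReal.ofReal (C₁ * min ε⁻¹ ‖x‖⁻¹ + C₁))
    (hν : ∀ A, MeasurableSet A → ν A ≤ ∫⁻ x in A, ENNReal.ofReal (C₁ * ‖x‖⁻¹ * exp (-c * ‖x‖))) :
    ∑' z, μ (ball (lattPt ε z) (2 * ε)) * ν (ball (lattPt ε z) (3 * ε)) ≤
      ENNReal.ofReal (2744 * π ^ 2 * C₁ ^ 2 * ε ^ 2 * (1 + |log ε| + c⁻¹)) := by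
  have hoverlap := tsum_setLIntegral_ball_lattPt_le hε 3
    ((measurable_mismatchKernel C₁ c ε).comp measurable_norm).ennreal_ofReal
  simp only [Function.comp_apply, Nat.cast_ofNat] at hoverlap
  calc ∑' z, μ (ball (lattPt ε z) (2 * ε)) * ν (ball (lattPt ε z) (3 * ε))
      ≤ ∑' z, ENNReal.ofReal (4 * π * ε ^ 2) *
          ∫⁻ x in ball (lattPt ε z) (3 * ε), ENNReal.ofReal (mismatchKernel C₁ c ε ‖x‖) :=
        ENNReal.tsum_le_tsum fun z ↦ measure_ball_mul_measure_ball_le hC₁ hε hμ hν _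
    _ ≤ ENNReal.ofReal (4 * π * ε ^ 2) *
          ((2 * 3 + 1) ^ 2 * ENNReal.ofReal (14 * π * C₁ ^ 2 * (1 + |log ε| + c⁻¹))) := by
        grw [ENNReal.tsum_mul_left, hoverlap, lintegral_mismatchKernel_le hC₁ hc hε hε1]
    _ = _ := by
        rw [show (2 * 3 + 1) ^ 2 = ENNReal.ofReal 49 by norm_num,
          ← ENNReal.ofReal_mul (by norm_num), ← ENNReal.ofReal_mul (by positivity)]
        ring_nf

end DensityBounds

/-- if μ(dx) ≤ C₁ min(ε⁻¹,|x|⁻¹) dx + C₁ dx and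
ν(dx) ≤ C₁ |x|⁻¹ e^{-c|x|} dx, then
ε⁻¹ Σ_{z ∈ ℤ²} μ(B(εz,2ε)) ν(B(εz,3ε)) ≤ C₂ ε |log ε|, with C₂ = C₂(C₁, c). -/
theorem stmt13 (C₁ c : ℝ) (hC₁ : 0 < C₁) (hc : 0 < c) :
    ∃ C₂ : ℝ, ∀ ε : ℝ, ε ∈ Ioo 0 (1 / 2 : ℝ) →
      ∀ μ ν : Measure (EuclideanSpace ℝ (Fin 2)),
        IsFiniteMeasure μ → IsFiniteMeasure ν →
        (∀ A : Set (EuclideanSpace ℝ (Fin 2)), MeasurableSet A →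
          μ A ≤ ∫⁻ x in A, ENNReal.ofReal (C₁ * min ε⁻¹ ‖x‖⁻¹ + C₁)) →
        (∀ A : Set (EuclideanSpace ℝ (Fin 2)), MeasurableSet A →
          ν A ≤ ∫⁻ x in A, ENNReal.ofReal (C₁ * ‖x‖⁻¹ * Real.exp (-c * ‖x‖))) →
        (ENNReal.ofReal ε)⁻¹ *
            ∑' z : ℤ × ℤ, μ (Metric.ball (lattPt ε z) (2 * ε)) *
              ν (Metric.ball (lattPt ε z) (3 * ε)) ≤
          ENNReal.ofReal (C₂ * ε * |Real.log ε|) := by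
  refine ⟨2744 * π ^ 2 * C₁ ^ 2 * (3 + 2 / c), ?_⟩
  rintro ε ⟨hε, hε_half⟩ μ ν - - hμ hν
  rw [ENNReal.inv_mul_le_iff (by simpa using hε) ENNReal.ofReal_ne_top,
    ← ENNReal.ofReal_mul hε.le]
  refine (tsum_measure_ball_mul_measure_ball_le hC₁.le hc hε (by linarith) hμ hν).trans
    (ENNReal.ofReal_le_ofReal ?_)
  calc 2744 * π ^ 2 * C₁ ^ 2 * ε ^ 2 * (1 + |log ε| + c⁻¹)
      ≤ 2744 * π ^ 2 * C₁ ^ 2 * ε ^ 2 * ((3 + 2 / c) * |log ε|) := by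
        grw [one_add_abs_log_add_inv_le hε hε_half hc]
    _ = ε * (2744 * π ^ 2 * C₁ ^ 2 * (3 + 2 / c) * ε * |log ε|) := by ring
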